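/- Let k ≥ 1, let S = {1,…,k}, and let D ⊆ {1,…,k−1} be any (possibly empty) set of positive integers less than k. Let G be a finite simple graph, G' a finite simple graph with V(G) ⊆ V(G'), and Blue_0, Red_0 disjoint subsets of V(G') \ V(G) such that: (a) every vertex of V(G') \ (V(G) ∪ Blue_0 ∪ Red_0) is at graph distance at most k in G' from some vertex of Blue_0 and at distance at most k from some vertex of Red_0; (b) every vertex of V(G) is at distance at least k+1 from every vertex of Blue_0 ∪ Red_0; (c) for distinct u, v ∈ V(G), dist_{G'}(u,v) = k if uv is an edge of G, and dist_{G'}(u,v) ≥ k+1 otherwise; (d) any two distinct vertices of Blue_0 ∪ Red_0 are at distance at least k+1. Then the distance game D⟨D,S⟩ on G' starting from the position with blue pieces on Blue_0 and red pieces on Red_0 is play-for-play equivalent to Col on G starting from the empty position: positions correspond by restricting the pieces to V(G), each player's legal moves agree under this correspondence (Left may place on an unoccupied u ∈ V(G) if and only if no G-neighbour of u is blue, and symmetrically for Right), and in particular the player moving first (respectively, second) has a winning strategy in one game if and only if in the other. -/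

import Mathlib

universe u

namespace SetTheory

/-- The type of pre-games (as in Mathlib of December 2024, since removed from Mathlib). -/
inductive PGame : Type (u + 1)
  | mk : ∀ α β : Type u, (α → PGame) → (β → PGame) → PGame

namespace PGame

/-- The indexing type for allowable moves by Left. -/
def LeftMoves : PGame → Type u
  | mk l _ _ _ => l

/-- The indexing type for allowable moves by Right. -/
def RightMoves : PGame → Type u
  | mk _ r _ _ => r

/-- The new game after Left makes an allowed move. -/
def moveLeft : ∀ g : PGame, LeftMoves g → PGame
  | mk _l _ L _ => L

/-- The new game after Right makes an allowed move. -/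
def moveRight : ∀ g : PGame, RightMoves g → PGame
  | mk _ _r _ R => R

/-- The zero game. -/
instance : Zero PGame :=
  ⟨mk PEmpty PEmpty PEmpty.elim PEmpty.elim⟩

/-- Auxiliary recursion on the second game for `leLF`. -/
def leLFAux {xl xr : Type u} (xL : xl → PGame) (xR : xr → PGame)
    (IHl : xl → PGame → Prop × Prop) (IHr : xr → PGame → Prop × Prop) : PGame → Prop × Prop
  | mk yl yr yL yR =>
    ((∀ i, (IHl i (mk yl yr yL yR)).2) ∧ ∀ j, (leLFAux xL xR IHl IHr (yR j)).2,
      (∃ i, (leLFAux xL xR IHl IHr (yL i)).1) ∨ ∃ j, (IHr j (mk yl yr yL yR)).1)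

/-- The pair of relations `(x ≤ y, x ⧏ y)`, defined by mutual recursion. -/
def leLF : PGame → PGame → Prop × Prop
  | mk _ _ xL xR => leLFAux xL xR (fun i => leLF (xL i)) (fun j => leLF (xR j))

/-- The less or equal relation on pre-games. -/
instance le : LE PGame :=
  ⟨fun x y => (leLF x y).1⟩

/-- The less or fuzzy relation on pre-games: `x ⧏ y` iff `¬ y ≤ x`. -/
def LF (x y : PGame) : Prop :=
  ¬y ≤ x

infixl:50 " ⧏ " => PGame.LF

/-- `Relabelling x y` says that `x` and `y` are really the same game, just dressed up
differently. -/
inductive Relabelling : PGame.{u} → PGame.{u} → Type (u + 1)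
  | mk : ∀ {x y : PGame} (L : x.LeftMoves ≃ y.LeftMoves) (R : x.RightMoves ≃ y.RightMoves),
      (∀ i, Relabelling (x.moveLeft i) (y.moveLeft (L i))) →
        (∀ j, Relabelling (x.moveRight j) (y.moveRight (R j))) → Relabelling x y

infixl:50 " ≡r " => PGame.Relabelling

end PGame

end SetTheory

open SimpleGraph SetTheory

/-- In the distance game `D⟨D,S⟩` on the graph `G`, from the position with blue pieces on
`blue` and red pieces on `red`, Left may legally place a blue piece on the vertex `v`. -/
def LeftMove {W : Type*} (G : SimpleGraph W) (D S : Set ℕ) (blue red : Finset W) (v : W) : Prop :=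
  v ∉ blue ∧ v ∉ red ∧ (∀ r ∈ red, ∀ d ∈ D, G.edist v r ≠ (d : ℕ∞)) ∧
    ∀ b ∈ blue, ∀ s ∈ S, G.edist v b ≠ (s : ℕ∞)

/-- Right may legally place a red piece on the vertex `v`. -/
def RightMove {W : Type*} (G : SimpleGraph W) (D S : Set ℕ) (blue red : Finset W) (v : W) : Prop :=
  v ∉ blue ∧ v ∉ red ∧ (∀ b ∈ blue, ∀ d ∈ D, G.edist v b ≠ (d : ℕ∞)) ∧
    ∀ r ∈ red, ∀ s ∈ S, G.edist v r ≠ (s : ℕ∞)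

/-- The distance game `D⟨D,S⟩` on `G` from the position `(blue, red)`, as a combinatorial
game (normal play: a player with no legal move loses). -/
def distGame {W : Type*} [Fintype W] [DecidableEq W] (G : SimpleGraph W) (D S : Set ℕ)
    (blue red : Finset W) : PGame :=
  PGame.mk {v // LeftMove G D S blue red v} {v // RightMove G D S blue red v}
    (fun x => distGame G D S (insert x.1 blue) red)
    (fun x => distGame G D S blue (insert x.1 red))
termination_by ((blue ∪ red)ᶜ).card
decreasing_by
  · obtain ⟨h1, h2, -, -⟩ := x.2
    calc ((insert x.1 blue ∪ red)ᶜ).card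
        = (((blue ∪ red)ᶜ).erase x.1).card := by
          rw [Finset.insert_union, Finset.compl_insert]
      _ < ((blue ∪ red)ᶜ).card :=
          Finset.card_erase_lt_of_mem (Finset.mem_compl.2 (by simp [h1, h2]))
  · obtain ⟨h1, h2, -, -⟩ := x.2
    calc ((blue ∪ insert x.1 red)ᶜ).card
        = (((blue ∪ red)ᶜ).erase x.1).card := by
          rw [Finset.union_insert, Finset.compl_insert]
      _ < ((blue ∪ red)ᶜ).card :=
          Finset.card_erase_lt_of_mem (Finset.mem_compl.2 (by simp [h1, h2]))

/-- `BiGraph-Node-Kayles` on a bipartite graph `G` with parts `VL`, `VR`, from the position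
where `occ` is the set of occupied vertices: players alternately occupy vertices that are
neither equal nor adjacent to a previously occupied vertex, Left occupying only vertices of
`VL` and Right only vertices of `VR`; a player with no legal move loses. -/
def bnkGame {V : Type*} [Fintype V] [DecidableEq V] (G : SimpleGraph V) (VL VR : Finset V)
    (occ : Finset V) : PGame :=
  PGame.mk {v // v ∈ VL ∧ v ∉ occ ∧ ∀ u ∈ occ, ¬G.Adj v u}
    {v // v ∈ VR ∧ v ∉ occ ∧ ∀ u ∈ occ, ¬G.Adj v u}
    (fun x => bnkGame G VL VR (insert x.1 occ))
    (fun x => bnkGame G VL VR (insert x.1 occ))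
termination_by occᶜ.card
decreasing_by
  all_goals
  · obtain ⟨-, h1, -⟩ := x.2
    calc ((insert x.1 occ)ᶜ).card = (occᶜ.erase x.1).card := by rw [Finset.compl_insert]
      _ < occᶜ.card := Finset.card_erase_lt_of_mem (Finset.mem_compl.2 h1)


/-!
A vertex `ι v` of `V(G)` is at distance more than `k` from every initial piece, so those pieces
never constrain it, and two vertices of `V(G)` are at distance `0`, `k` (an edge of `G`) or more
than `k`. Hence on `V(G)` the rule "distance to an opponent's piece is not in `D ⊆ [1, k)`" never
bites, and "distance to an own piece is not in `[1, k]`" is exactly Col's rule of not playing next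
to an own piece. Every other vertex is occupied or within distance `k` of both an initial blue and
an initial red piece, so nobody can ever play there. Thus in every position `ι` matches the moves
of the two games, and induction on the number of free vertices turns the distance game into a
relabelling of Col; relabellings preserve the order relations that encode the outcomes.
-/

namespace SetTheory.PGame

def Relabelling.refl : ∀ x : PGame.{u}, x ≡r x
  | PGame.mk _ _ xL xR => ⟨Equiv.refl _, Equiv.refl _, fun i => refl (xL i), fun j => refl (xR j)⟩

theorem Relabelling.leLF_iff {x x' y y' : PGame.{u}} (hx : x ≡r x') (hy : y ≡r y') :
    ((leLF x y).1 ↔ (leLF x' y').1) ∧ ((leLF x y).2 ↔ (leLF x' y').2) := by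
  induction x generalizing x' y y' with | mk xl xr xL xR ihxL ihxR => ?_
  induction y generalizing y' with | mk yl yr yL yR ihyL ihyR => ?_
  obtain ⟨Lx, Rx, hLx, hRx⟩ := id hx
  obtain ⟨Ly, Ry, hLy, hRy⟩ := id hy
  cases x'; cases y'
  exact ⟨and_congr (Lx.forall_congr fun i => (ihxL i (hLx i) hy).2)
      (Ry.forall_congr fun j => (ihyR j (hRy j)).2),
    or_congr (Ly.exists_congr fun i => (ihyL i (hLy i)).1)
      (Rx.exists_congr fun j => (ihxR j (hRx j) hy).1)⟩

theorem Relabelling.le_iff {x x' y y' : PGame.{u}} (hx : x ≡r x') (hy : y ≡r y') :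
    x ≤ y ↔ x' ≤ y' :=
  (leLF_iff hx hy).1

theorem Relabelling.lf_iff {x x' y y' : PGame.{u}} (hx : x ≡r x') (hy : y ≡r y') :
    x ⧏ y ↔ x' ⧏ y' :=
  not_congr (le_iff hy hx)

theorem nonempty_relabelling_mk {xl xr yl yr : Type u} {xL : xl → PGame} {xR : xr → PGame}
    {yL : yl → PGame} {yR : yr → PGame} (L : yl ≃ xl) (R : yr ≃ xr)
    (hL : ∀ j, Nonempty (xL (L j) ≡r yL j)) (hR : ∀ j, Nonempty (xR (R j) ≡r yR j)) :
    Nonempty (mk xl xr xL xR ≡r mk yl yr yL yR) :=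
  ⟨⟨L.symm, R.symm, fun i => (L.apply_symm_apply i ▸ hL (L.symm i)).some,
    fun j => (R.apply_symm_apply j ▸ hR (R.symm j)).some⟩⟩

end SetTheory.PGame

noncomputable def Function.Embedding.subtypeEquivOfForallNe {α β : Type*} (ι : α ↪ β)
    {p : α → Prop} {q : β → Prop} (h : ∀ a, q (ι a) ↔ p a) (hq : ∀ b, (∀ a, ι a ≠ b) → ¬q b) :
    {a // p a} ≃ {b // q b} :=
  Equiv.ofBijective (fun a => ⟨ι a, (h a).2 a.2⟩) <| by
    refine ⟨fun a a' haa' => Subtype.ext (ι.injective (congrArg Subtype.val haa')), ?_⟩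
    rintro ⟨b, hb⟩
    by_contra! hne
    refine hq b (fun a hab => ?_) hb
    subst hab
    exact hne ⟨a, (h a).1 hb⟩ rfl

theorem Function.Embedding.coe_subtypeEquivOfForallNe_apply {α β : Type*} (ι : α ↪ β)
    {p : α → Prop} {q : β → Prop} (h : ∀ a, q (ι a) ↔ p a) (hq : ∀ b, (∀ a, ι a ≠ b) → ¬q b)
    (a : {a // p a}) : (ι.subtypeEquivOfForallNe h hq a : β) = ι a :=
  rfl

theorem Finset.card_compl_insert_lt {α : Type*} [Fintype α] [DecidableEq α] {s : Finset α}
    {a : α} (ha : a ∉ s) : (insert a s)ᶜ.card < sᶜ.card := by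
  rw [Finset.compl_insert]
  exact Finset.card_erase_lt_of_mem (Finset.mem_compl.2 ha)

theorem nonempty_distGame_relabelling {V W : Type u} [Fintype V] [DecidableEq V] [Fintype W]
    [DecidableEq W] {G : SimpleGraph V} {G' : SimpleGraph W} {D S D' S' : Set ℕ} {ι : V ↪ W}
    {Blue0 Red0 : Finset W}
    (hL : ∀ (B R : Finset V) (x : V),
      LeftMove G' D' S' (Blue0 ∪ B.map ι) (Red0 ∪ R.map ι) (ι x) ↔ LeftMove G D S B R x)
    (hR : ∀ (B R : Finset V) (x : V),
      RightMove G' D' S' (Blue0 ∪ B.map ι) (Red0 ∪ R.map ι) (ι x) ↔ RightMove G D S B R x)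
    (hoff : ∀ (B R : Finset V) (w : W), (∀ v, ι v ≠ w) →
      ¬LeftMove G' D' S' (Blue0 ∪ B.map ι) (Red0 ∪ R.map ι) w ∧
        ¬RightMove G' D' S' (Blue0 ∪ B.map ι) (Red0 ∪ R.map ι) w)
    (B R : Finset V) :
    Nonempty (distGame G' D' S' (Blue0 ∪ B.map ι) (Red0 ∪ R.map ι) ≡r distGame G D S B R) := by
  rw [distGame, distGame]
  refine PGame.nonempty_relabelling_mk
    (ι.subtypeEquivOfForallNe (hL B R) fun w hw => (hoff B R w hw).1)
    (ι.subtypeEquivOfForallNe (hR B R) fun w hw => (hoff B R w hw).2)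
    (fun ⟨x, hxB, hxR, _⟩ => ?_) (fun ⟨x, hxB, hxR, _⟩ => ?_)
  all_goals
    rw [Function.Embedding.coe_subtypeEquivOfForallNe_apply, ← Finset.union_insert,
      ← Finset.map_insert]
  · exact nonempty_distGame_relabelling hL hR hoff (insert x B) R
  · exact nonempty_distGame_relabelling hL hR hoff B (insert x R)
termination_by ((B ∪ R)ᶜ).card
decreasing_by
  · rw [Finset.insert_union]
    exact Finset.card_compl_insert_lt (by simp [hxB, hxR])
  · rw [Finset.union_insert]
    exact Finset.card_compl_insert_lt (by simp [hxB, hxR])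

theorem rightMove_iff_leftMove_swap {W : Type*} (G : SimpleGraph W) (D S : Set ℕ)
    (blue red : Finset W) (v : W) :
    RightMove G D S blue red v ↔ LeftMove G D S red blue v :=
  and_left_comm

theorem leftMove_col_iff {V : Type*} (G : SimpleGraph V) (B R : Finset V) (x : V) :
    LeftMove G ∅ {1} B R x ↔ x ∉ B ∧ x ∉ R ∧ ∀ b ∈ B, ¬G.Adj x b := by
  simp [LeftMove, edist_eq_one_iff_adj]

theorem ENat.ne_natCast_of_natCast_add_one_le {k s : ℕ} {e : ℕ∞} (he : (k : ℕ∞) + 1 ≤ e)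
    (hs : s ≤ k) : e ≠ s := by
  rintro rfl
  have : k + 1 ≤ s := by exact_mod_cast he
  omega

theorem not_leftMove_of_edist_le {W : Type*} (G : SimpleGraph W) (D : Set ℕ) {k : ℕ}
    {blue red : Finset W} {w b : W} (hb : b ∈ blue) (hwb : G.edist w b ≤ k) :
    ¬LeftMove G D (Set.Icc 1 k) blue red w := by
  rintro ⟨hw, -, -, hS⟩
  have hne : w ≠ b := by rintro rfl; exact hw hb
  obtain ⟨s, hs⟩ := ENat.ne_top_iff_exists.mp (ne_top_of_le_ne_top (ENat.natCast_ne_top k) hwb)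
  have hs0 : s ≠ 0 := by
    rintro rfl
    exact hne (edist_eq_zero_iff.mp (hs.symm.trans Nat.cast_zero))
  exact hS b hb s ⟨by omega, by exact_mod_cast hs ▸ hwb⟩ hs.symm

section Embedding

variable {V W : Type*} {k : ℕ} {G : SimpleGraph V} {G' : SimpleGraph W} {ι : V ↪ W}

theorem exists_mem_Icc_edist_eq_iff_adj
    (hc : ∀ u v : V, u ≠ v →
      (G.Adj u v → G'.edist (ι u) (ι v) = k) ∧ (¬G.Adj u v → (k : ℕ∞) + 1 ≤ G'.edist (ι u) (ι v)))
    (x y : V) : (∃ s ∈ Set.Icc 1 k, G'.edist (ι x) (ι y) = s) ↔ G.Adj x y := by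
  rcases eq_or_ne x y with rfl | hxy
  · simp [eq_comm (a := (0 : ℕ∞))]
  by_cases hadj : G.Adj x y
  · refine iff_of_true ⟨k, ⟨?_, le_rfl⟩, (hc x y hxy).1 hadj⟩ hadj
    have := (edist_pos_of_ne (G := G') (ι.injective.ne hxy)).ne'
    rw [(hc x y hxy).1 hadj] at this
    exact Nat.one_le_iff_ne_zero.mpr (by exact_mod_cast this)
  · refine iff_of_false ?_ hadj
    rintro ⟨s, hs, he⟩
    exact ENat.ne_natCast_of_natCast_add_one_le ((hc x y hxy).2 hadj) hs.2 he

theorem edist_ne_of_pos_of_lt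
    (hc : ∀ u v : V, u ≠ v →
      (G.Adj u v → G'.edist (ι u) (ι v) = k) ∧ (¬G.Adj u v → (k : ℕ∞) + 1 ≤ G'.edist (ι u) (ι v)))
    (x y : V) {d : ℕ} (hd : 0 < d) (hdk : d < k) : G'.edist (ι x) (ι y) ≠ d := by
  intro he
  rcases eq_or_ne x y with rfl | hxy
  · rw [edist_self] at he
    exact hd.ne (by exact_mod_cast he)
  by_cases hadj : G.Adj x y
  · rw [(hc x y hxy).1 hadj] at he
    exact hdk.ne' (by exact_mod_cast he)
  · exact ENat.ne_natCast_of_natCast_add_one_le ((hc x y hxy).2 hadj) hdk.le he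

theorem leftMove_union_map_iff_col [DecidableEq W] {D : Set ℕ} (hD : ∀ d ∈ D, 1 ≤ d ∧ d < k)
    (hc : ∀ u v : V, u ≠ v →
      (G.Adj u v → G'.edist (ι u) (ι v) = k) ∧ (¬G.Adj u v → (k : ℕ∞) + 1 ≤ G'.edist (ι u) (ι v)))
    {P0 Q0 : Finset W} (hP0 : ∀ v, ι v ∉ P0) (hQ0 : ∀ v, ι v ∉ Q0)
    (hfar : ∀ v, ∀ w ∈ P0 ∪ Q0, (k : ℕ∞) + 1 ≤ G'.edist (ι v) w) (P Q : Finset V) (x : V) :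
    LeftMove G' D (Set.Icc 1 k) (P0 ∪ P.map ι) (Q0 ∪ Q.map ι) (ι x) ↔ LeftMove G ∅ {1} P Q x := by
  have hfarP : ∀ w ∈ P0, ∀ s ∈ Set.Icc 1 k, G'.edist (ι x) w ≠ s := fun w hw s hs =>
    ENat.ne_natCast_of_natCast_add_one_le (hfar x w (Finset.mem_union_left _ hw)) hs.2
  have hfarQ : ∀ w ∈ Q0, ∀ d ∈ D, G'.edist (ι x) w ≠ d := fun w hw d hd =>
    ENat.ne_natCast_of_natCast_add_one_le (hfar x w (Finset.mem_union_right _ hw)) (hD d hd).2.le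
  have hnearQ : ∀ y ∈ Q, ∀ d ∈ D, G'.edist (ι x) (ι y) ≠ d := fun y _ d hd =>
    edist_ne_of_pos_of_lt hc x y (hD d hd).1 (hD d hd).2
  have hmemP : ι x ∈ P0 ∪ P.map ι ↔ x ∈ P := by simp [hP0]
  have hmemQ : ι x ∈ Q0 ∪ Q.map ι ↔ x ∈ Q := by simp [hQ0]
  rw [leftMove_col_iff, LeftMove, hmemP, hmemQ, Finset.forall_mem_union, Finset.forall_mem_union,
    Finset.forall_mem_map, Finset.forall_mem_map, and_iff_right (And.intro hfarQ hnearQ),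
    and_iff_right hfarP]
  refine and_congr_right' (and_congr_right' (forall₂_congr fun y _ => ?_))
  simpa using not_congr (exists_mem_Icc_edist_eq_iff_adj hc x y)

end Embedding

theorem not_leftMove_and_not_rightMove_of_forall_ne {V W : Type*} [DecidableEq W] {k : ℕ}
    {D : Set ℕ} {G' : SimpleGraph W} {ι : V ↪ W} {Blue0 Red0 : Finset W}
    (ha : ∀ w : W, (∀ v : V, ι v ≠ w) → w ∉ Blue0 → w ∉ Red0 →
      (∃ b ∈ Blue0, G'.edist w b ≤ (k : ℕ∞)) ∧ (∃ r ∈ Red0, G'.edist w r ≤ (k : ℕ∞)))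
    (B R : Finset V) (w : W) (hw : ∀ v, ι v ≠ w) :
    ¬LeftMove G' D (Set.Icc 1 k) (Blue0 ∪ B.map ι) (Red0 ∪ R.map ι) w ∧
      ¬RightMove G' D (Set.Icc 1 k) (Blue0 ∪ B.map ι) (Red0 ∪ R.map ι) w := by
  by_cases hwB : w ∈ Blue0
  · have hw' := Finset.mem_union_left (B.map ι) hwB
    exact ⟨fun h => h.1 hw', fun h => h.1 hw'⟩
  by_cases hwR : w ∈ Red0
  · have hw' := Finset.mem_union_left (R.map ι) hwR
    exact ⟨fun h => h.2.1 hw', fun h => h.2.1 hw'⟩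
  obtain ⟨⟨b, hb, hwb⟩, r, hr, hwr⟩ := ha w hw hwB hwR
  rw [rightMove_iff_leftMove_swap]
  exact ⟨not_leftMove_of_edist_le G' D (Finset.mem_union_left _ hb) hwb,
    not_leftMove_of_edist_le G' D (Finset.mem_union_left _ hr) hwr⟩

open SetTheory.PGame in
theorem stmt13_general {V W : Type u} [Fintype V] [DecidableEq V] [Fintype W] [DecidableEq W]
    (k : ℕ) (D : Set ℕ) (hD : ∀ d ∈ D, 1 ≤ d ∧ d < k)
    (G : SimpleGraph V) (G' : SimpleGraph W) (ι : V ↪ W)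
    (Blue0 Red0 : Finset W)
    (hB0 : ∀ v : V, ι v ∉ Blue0) (hR0 : ∀ v : V, ι v ∉ Red0)
    -- (a) every extra vertex is within distance `k` of `Blue0` and of `Red0`:
    (ha : ∀ w : W, (∀ v : V, ι v ≠ w) → w ∉ Blue0 → w ∉ Red0 →
      (∃ b ∈ Blue0, G'.edist w b ≤ (k : ℕ∞)) ∧ (∃ r ∈ Red0, G'.edist w r ≤ (k : ℕ∞)))
    -- (b) every vertex of `V(G)` is at distance at least `k+1` from `Blue0 ∪ Red0`:
    (hb : ∀ v : V, ∀ w ∈ Blue0 ∪ Red0, (k : ℕ∞) + 1 ≤ G'.edist (ι v) w)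
    -- (c) distances between vertices of `V(G)`:
    (hc : ∀ u v : V, u ≠ v →
      (G.Adj u v → G'.edist (ι u) (ι v) = (k : ℕ∞)) ∧
      (¬G.Adj u v → (k : ℕ∞) + 1 ≤ G'.edist (ι u) (ι v))) :
    -- positions correspond by restricting the pieces to `V(G)`; each player's legal moves
    -- agree under this correspondence (Left may place on an unoccupied `u ∈ V(G)` iff no
    -- `G`-neighbour of `u` is blue, and symmetrically for Right):
    (∀ B R : Finset V, Disjoint B R →
      (∀ x : V,
        LeftMove G' D (Set.Icc 1 k) (Blue0 ∪ B.map ι) (Red0 ∪ R.map ι) (ι x) ↔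
          LeftMove G (∅ : Set ℕ) {1} B R x) ∧
      (∀ x : V,
        RightMove G' D (Set.Icc 1 k) (Blue0 ∪ B.map ι) (Red0 ∪ R.map ι) (ι x) ↔
          RightMove G (∅ : Set ℕ) {1} B R x) ∧
      (∀ w : W, (∀ v : V, ι v ≠ w) →
        ¬LeftMove G' D (Set.Icc 1 k) (Blue0 ∪ B.map ι) (Red0 ∪ R.map ι) w ∧
        ¬RightMove G' D (Set.Icc 1 k) (Blue0 ∪ B.map ι) (Red0 ∪ R.map ι) w)) ∧
    -- the two games are play-for-play equivalent:
    Nonempty (distGame G' D (Set.Icc 1 k) Blue0 Red0 ≡r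
      distGame G (∅ : Set ℕ) ({1} : Set ℕ) (∅ : Finset V) (∅ : Finset V)) ∧
    -- in particular, the player moving first (respectively, second) has a winning strategy
    -- in one game iff in the other:
    ((0 ⧏ distGame G' D (Set.Icc 1 k) Blue0 Red0 ↔
        0 ⧏ distGame G (∅ : Set ℕ) ({1} : Set ℕ) (∅ : Finset V) (∅ : Finset V)) ∧
      (0 ≤ distGame G' D (Set.Icc 1 k) Blue0 Red0 ↔
        0 ≤ distGame G (∅ : Set ℕ) ({1} : Set ℕ) (∅ : Finset V) (∅ : Finset V)) ∧
      (distGame G' D (Set.Icc 1 k) Blue0 Red0 ⧏ 0 ↔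
        distGame G (∅ : Set ℕ) ({1} : Set ℕ) (∅ : Finset V) (∅ : Finset V) ⧏ 0) ∧
      (distGame G' D (Set.Icc 1 k) Blue0 Red0 ≤ 0 ↔
        distGame G (∅ : Set ℕ) ({1} : Set ℕ) (∅ : Finset V) (∅ : Finset V) ≤ 0)) := by
  have hL := leftMove_union_map_iff_col hD hc hB0 hR0 hb
  have hR : ∀ (B R : Finset V) (x : V),
      RightMove G' D (Set.Icc 1 k) (Blue0 ∪ B.map ι) (Red0 ∪ R.map ι) (ι x) ↔
        RightMove G ∅ {1} B R x := fun B R x => by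
    rw [rightMove_iff_leftMove_swap, rightMove_iff_leftMove_swap]
    have hb' : ∀ v : V, ∀ w ∈ Red0 ∪ Blue0, (k : ℕ∞) + 1 ≤ G'.edist (ι v) w := by
      simpa only [Finset.union_comm] using hb
    exact leftMove_union_map_iff_col hD hc hR0 hB0 hb' R B x
  have hoff := not_leftMove_and_not_rightMove_of_forall_ne (D := D) ha
  obtain ⟨e⟩ : Nonempty (distGame G' D (Set.Icc 1 k) Blue0 Red0 ≡r
      distGame G (∅ : Set ℕ) ({1} : Set ℕ) (∅ : Finset V) (∅ : Finset V)) := by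
    simpa using nonempty_distGame_relabelling hL hR hoff ∅ ∅
  have e0 := Relabelling.refl 0
  exact ⟨fun B R _ => ⟨hL B R, hR B R, hoff B R⟩, ⟨e⟩,
    e0.lf_iff e, e0.le_iff e, e.lf_iff e0, e.le_iff e0⟩

open SetTheory.PGame in
/-- for `S = {1,…,k}` and `D ⊆ {1,…,k−1}`, under hypotheses (a)–(d), the
distance game `D⟨D,S⟩` on `G'` starting from the position with blue pieces on `Blue0` and
red pieces on `Red0` is play-for-play equivalent to `Col = D⟨∅,{1}⟩` on `G` starting from
the empty position. -/
theorem stmt13 {V W : Type u} [Fintype V] [DecidableEq V] [Fintype W] [DecidableEq W]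
    (k : ℕ) (hk : 1 ≤ k) (D : Set ℕ) (hD : ∀ d ∈ D, 1 ≤ d ∧ d < k)
    (G : SimpleGraph V) (G' : SimpleGraph W) (ι : V ↪ W)
    (Blue0 Red0 : Finset W) (hBR : Disjoint Blue0 Red0)
    (hB0 : ∀ v : V, ι v ∉ Blue0) (hR0 : ∀ v : V, ι v ∉ Red0)
    -- (a) every extra vertex is within distance `k` of `Blue0` and of `Red0`:
    (ha : ∀ w : W, (∀ v : V, ι v ≠ w) → w ∉ Blue0 → w ∉ Red0 →
      (∃ b ∈ Blue0, G'.edist w b ≤ (k : ℕ∞)) ∧ (∃ r ∈ Red0, G'.edist w r ≤ (k : ℕ∞)))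
    -- (b) every vertex of `V(G)` is at distance at least `k+1` from `Blue0 ∪ Red0`:
    (hb : ∀ v : V, ∀ w ∈ Blue0 ∪ Red0, (k : ℕ∞) + 1 ≤ G'.edist (ι v) w)
    -- (c) distances between vertices of `V(G)`:
    (hc : ∀ u v : V, u ≠ v →
      (G.Adj u v → G'.edist (ι u) (ι v) = (k : ℕ∞)) ∧
      (¬G.Adj u v → (k : ℕ∞) + 1 ≤ G'.edist (ι u) (ι v)))
    -- (d) distinct vertices of `Blue0 ∪ Red0` are at distance at least `k+1`:
    (hd : ∀ w₁ ∈ Blue0 ∪ Red0, ∀ w₂ ∈ Blue0 ∪ Red0, w₁ ≠ w₂ →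
      (k : ℕ∞) + 1 ≤ G'.edist w₁ w₂) :
    -- positions correspond by restricting the pieces to `V(G)`; each player's legal moves
    -- agree under this correspondence (Left may place on an unoccupied `u ∈ V(G)` iff no
    -- `G`-neighbour of `u` is blue, and symmetrically for Right):
    (∀ B R : Finset V, Disjoint B R →
      (∀ x : V,
        LeftMove G' D (Set.Icc 1 k) (Blue0 ∪ B.map ι) (Red0 ∪ R.map ι) (ι x) ↔
          LeftMove G (∅ : Set ℕ) {1} B R x) ∧
      (∀ x : V,
        RightMove G' D (Set.Icc 1 k) (Blue0 ∪ B.map ι) (Red0 ∪ R.map ι) (ι x) ↔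
          RightMove G (∅ : Set ℕ) {1} B R x) ∧
      (∀ w : W, (∀ v : V, ι v ≠ w) →
        ¬LeftMove G' D (Set.Icc 1 k) (Blue0 ∪ B.map ι) (Red0 ∪ R.map ι) w ∧
        ¬RightMove G' D (Set.Icc 1 k) (Blue0 ∪ B.map ι) (Red0 ∪ R.map ι) w)) ∧
    -- the two games are play-for-play equivalent:
    Nonempty (distGame G' D (Set.Icc 1 k) Blue0 Red0 ≡r
      distGame G (∅ : Set ℕ) ({1} : Set ℕ) (∅ : Finset V) (∅ : Finset V)) ∧
    -- in particular, the player moving first (respectively, second) has a winning strategy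
    -- in one game iff in the other:
    ((0 ⧏ distGame G' D (Set.Icc 1 k) Blue0 Red0 ↔
        0 ⧏ distGame G (∅ : Set ℕ) ({1} : Set ℕ) (∅ : Finset V) (∅ : Finset V)) ∧
      (0 ≤ distGame G' D (Set.Icc 1 k) Blue0 Red0 ↔
        0 ≤ distGame G (∅ : Set ℕ) ({1} : Set ℕ) (∅ : Finset V) (∅ : Finset V)) ∧
      (distGame G' D (Set.Icc 1 k) Blue0 Red0 ⧏ 0 ↔
        distGame G (∅ : Set ℕ) ({1} : Set ℕ) (∅ : Finset V) (∅ : Finset V) ⧏ 0) ∧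
      (distGame G' D (Set.Icc 1 k) Blue0 Red0 ≤ 0 ↔
        distGame G (∅ : Set ℕ) ({1} : Set ℕ) (∅ : Finset V) (∅ : Finset V) ≤ 0)) :=
  stmt13_general k D hD G G' ι Blue0 Red0 hB0 hR0 ha hb hc
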